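/- arXiv:1310.5294 — 5 statements merged into one kernel-verified Lean document; each statement's English description precedes it below -/
import Mathlib

section
/- For a finite poset P, the composition of toggles along any linear extension x₁, x₂, …, x_m of P, namely τ_{x₁} ∘ τ_{x₂} ∘ ⋯ ∘ τ_{x_m}, equals the rowmotion map ρ = α₃ ∘ α₂ ∘ α₁, where α₁ takes complements, α₂ takes minimal elements, and α₃ takes downward saturation. -/
open scoped symmDiff
open Classical

/-- The combinatorial toggle at `x` on subsets of a poset. -/

noncomputable def toggle {P : Type*} [PartialOrder P] (x : P) (I : Set P) : Set P :=
  if IsLowerSet (I ∆ {x}) then I ∆ {x} else I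

/-- Rowmotion: the downward saturation of the set of minimal elements
of the complement. -/
def rowmotion {P : Type*} [PartialOrder P] (I : Set P) : Set P :=
  {y | ∃ x, (x ∈ Iᶜ ∧ ∀ z ∈ Iᶜ, z ≤ x → z = x) ∧ y ≤ x}

/-!
Let `I` be an order ideal and `R = ρ(I)`. The key observation is that the rule deciding whether
`a` lies in `R` has the same shape as the rule deciding whether `a` survives the toggle `τ_a`:
`a ∈ R` iff some `c > a` lies in `R`, or `a` is minimal outside `I`; and for an order ideal `J`,
`a ∈ τ_a(J)` iff some `c > a` lies in `J`, or `a ∉ J` and every `b < a` lies in `J`.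
Toggling along a linear extension from the top down, the current ideal agrees with `R` on the
elements already toggled (an upper set `S`) and with `I` elsewhere, i.e. equals `S.ite R I`,
so at the toggle of `a` the two rules are evaluated on the same data and the invariant propagates.
-/

namespace Set

variable {α : Type*} {t s s' : Set α} {x : α}

theorem mem_ite_of_mem (hx : x ∈ t) : x ∈ t.ite s s' ↔ x ∈ s := by
  simp [Set.ite, hx]

theorem mem_ite_of_notMem (hx : x ∉ t) : x ∈ t.ite s s' ↔ x ∈ s' := by
  simp [Set.ite, hx]

end Set

section Toggle

variable {P : Type*} [PartialOrder P] {I J S : Set P} {a x : P}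

theorem mem_toggle_of_ne (hx : x ≠ a) : x ∈ toggle a J ↔ x ∈ J := by
  unfold toggle
  split_ifs
  · simp [Set.mem_symmDiff, hx]
  · rfl

theorem isLowerSet_symmDiff_singleton_iff (hJ : IsLowerSet J) :
    IsLowerSet (J ∆ {a}) ↔ (∀ c, a < c → c ∉ J) ∧ ∀ b < a, b ∈ J := by
  constructor
  · intro h
    have ha : a ∈ J ∆ {a} ↔ a ∉ J := by simp [Set.mem_symmDiff]
    refine ⟨fun c hac hc => ?_, fun b hba => ?_⟩
    · have hcJ : c ∈ J ∆ {a} := by simp [Set.mem_symmDiff, hc, hac.ne']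
      exact ha.mp (h hac.le hcJ) (hJ hac.le hc)
    · by_cases haJ : a ∈ J
      · exact hJ hba.le haJ
      · simpa [Set.mem_symmDiff, hba.ne] using h hba.le (ha.mpr haJ)
  · rintro ⟨habove, hbelow⟩ y z hzy hy
    simp only [Set.mem_symmDiff, Set.mem_singleton_iff] at hy ⊢
    rcases hy with ⟨hyJ, hya⟩ | ⟨rfl, haJ⟩
    · exact .inl ⟨hJ hzy hyJ, by rintro rfl; exact habove y (hzy.lt_of_ne (Ne.symm hya)) hyJ⟩
    · rcases hzy.lt_or_eq with hzy | rfl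
      · exact .inl ⟨hbelow z hzy, hzy.ne⟩
      · exact .inr ⟨rfl, haJ⟩

theorem self_mem_toggle_iff (hJ : IsLowerSet J) :
    a ∈ toggle a J ↔ (∃ c, a < c ∧ c ∈ J) ∨ (a ∉ J ∧ ∀ b < a, b ∈ J) := by
  have hflip : a ∈ toggle a J ↔ (a ∈ J ↔ ¬ IsLowerSet (J ∆ {a})) := by
    unfold toggle
    split_ifs with h <;> simp [Set.mem_symmDiff, h]
  have habove : a ∉ J → ∀ c, a < c → c ∉ J := fun ha c hac hc => ha (hJ hac.le hc)
  have hbelow : a ∈ J → ∀ b < a, b ∈ J := fun ha b hba => hJ hba.le ha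
  rw [hflip, isLowerSet_symmDiff_singleton_iff hJ]
  by_cases ha : a ∈ J
  · have := hbelow ha
    grind
  · have := habove ha
    grind

theorem isLowerSet_rowmotion (I : Set P) : IsLowerSet (rowmotion I) := by
  rintro y z hzy ⟨x, hx, hyx⟩
  exact ⟨x, hx, hzy.trans hyx⟩

theorem mem_of_lt_of_mem_rowmotion (hxy : x < a) (ha : a ∈ rowmotion I) : x ∈ I := by
  obtain ⟨m, ⟨-, hm⟩, ham⟩ := ha
  by_contra hx
  exact (hxy.trans_le ham).ne (hm x hx (hxy.le.trans ham))

theorem self_mem_rowmotion_iff :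
    a ∈ rowmotion I ↔ (∃ c, a < c ∧ c ∈ rowmotion I) ∨ (a ∉ I ∧ ∀ b < a, b ∈ I) := by
  constructor
  · rintro ⟨m, ⟨hmI, hmin⟩, ham⟩
    rcases ham.lt_or_eq with ham | rfl
    · exact .inl ⟨m, ham, m, ⟨hmI, hmin⟩, le_rfl⟩
    · exact .inr ⟨hmI, fun b hba => by_contra fun hb => hba.ne (hmin b hb hba.le)⟩
  · rintro (⟨c, hac, hc⟩ | ⟨ha, hbelow⟩)
    · exact isLowerSet_rowmotion I hac.le hc
    · refine ⟨a, ⟨ha, fun z hz hza => ?_⟩, le_rfl⟩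
      by_contra hne
      exact hz (hbelow z (hza.lt_of_ne hne))

theorem isLowerSet_ite_rowmotion (hI : IsLowerSet I) (hS : IsUpperSet S) :
    IsLowerSet (S.ite (rowmotion I) I) := by
  intro y z hzy hy
  by_cases hyS : y ∈ S
  · rw [Set.mem_ite_of_mem hyS] at hy
    by_cases hzS : z ∈ S
    · exact (Set.mem_ite_of_mem hzS).mpr (isLowerSet_rowmotion I hzy hy)
    · have hzy : z < y := hzy.lt_of_ne (ne_of_mem_of_not_mem hyS hzS).symm
      exact (Set.mem_ite_of_notMem hzS).mpr (mem_of_lt_of_mem_rowmotion hzy hy)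
  · have hzS : z ∉ S := fun hzS => hyS (hS hzy hzS)
    rw [Set.mem_ite_of_notMem hyS] at hy
    exact (Set.mem_ite_of_notMem hzS).mpr (hI hzy hy)

theorem toggle_ite_rowmotion (hI : IsLowerSet I) (hS : IsUpperSet S) (haS : a ∉ S)
    (hS' : IsUpperSet (insert a S)) :
    toggle a (S.ite (rowmotion I) I) = (insert a S).ite (rowmotion I) I := by
  ext x
  rcases eq_or_ne x a with rfl | hxa
  · have habove (c : P) (hxc : x < c) : c ∈ S.ite (rowmotion I) I ↔ c ∈ rowmotion I :=
      Set.mem_ite_of_mem ((hS' hxc.le (Set.mem_insert x S)).resolve_left hxc.ne')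
    have hbelow (b : P) (hbx : b < x) : b ∈ S.ite (rowmotion I) I ↔ b ∈ I :=
      Set.mem_ite_of_notMem fun hb => haS (hS hbx.le hb)
    rw [self_mem_toggle_iff (isLowerSet_ite_rowmotion hI hS), Set.mem_ite_of_notMem haS,
      Set.mem_ite_of_mem (Set.mem_insert x S), self_mem_rowmotion_iff]
    exact or_congr (exists_congr fun c => and_congr_right (habove c))
      (and_congr_right fun _ => forall₂_congr hbelow)
  · rw [mem_toggle_of_ne hxa]
    by_cases hxS : x ∈ S
    · rw [Set.mem_ite_of_mem hxS, Set.mem_ite_of_mem (Set.mem_insert_of_mem a hxS)]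
    · have hxS' : x ∉ insert a S := by simp [hxa, hxS]
      rw [Set.mem_ite_of_notMem hxS, Set.mem_ite_of_notMem hxS']

theorem foldr_toggle_eq_ite_rowmotion (hI : IsLowerSet I) (s : List P) (hnd : s.Nodup)
    (hle : s.Pairwise fun a b => ¬ b < a) (hs : IsUpperSet {x | x ∈ s}) :
    s.foldr toggle I = {x | x ∈ s}.ite (rowmotion I) I := by
  induction s with
  | nil => simp
  | cons a t ih =>
    obtain ⟨hat, hnd⟩ := List.nodup_cons.mp hnd
    obtain ⟨hta, hle⟩ := List.pairwise_cons.mp hle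
    have hinsert : insert a {x | x ∈ t} = {x | x ∈ a :: t} := by ext; simp
    have ht : IsUpperSet {x | x ∈ t} := by
      intro x y hxy hx
      rcases List.mem_cons.mp (hs hxy (List.mem_cons_of_mem a hx)) with rfl | hy
      · exact absurd (hxy.lt_of_ne (ne_of_mem_of_not_mem hx hat)) (hta x hx)
      · exact hy
    rw [List.foldr_cons, ih hnd hle ht, toggle_ite_rowmotion hI ht hat (hinsert ▸ hs), hinsert]

end Toggle

theorem toggle_linear_extension_eq_rowmotion_general {P : Type*} [PartialOrder P]
    (l : List P) (hnd : l.Nodup) (hmem : ∀ x : P, x ∈ l)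
    (hle : l.Pairwise (fun a b => ¬ b < a))
    (I : Set P) (hI : IsLowerSet I) :
    l.foldr toggle I = rowmotion I := by
  have hl : {x | x ∈ l} = Set.univ := Set.eq_univ_of_forall hmem
  rw [foldr_toggle_eq_ite_rowmotion hI l hnd hle (hl ▸ isUpperSet_univ), hl, Set.ite_univ]

theorem toggle_linear_extension_eq_rowmotion {P : Type*} [PartialOrder P] [Fintype P]
    (l : List P) (hnd : l.Nodup) (hmem : ∀ x : P, x ∈ l)
    (hle : l.Pairwise (fun a b => ¬ b < a))
    (I : Set P) (hI : IsLowerSet I) :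
    l.foldr toggle I = rowmotion I :=
  toggle_linear_extension_eq_rowmotion_general l hnd hmem hle I hI
end

section
/- Each piecewise-linear toggle φ_x on ℝ^P preserves the quantity min{f(y) − f(w) : w, y ∈ P̂, w ⋖ y}, where f(0̂)=0 and f(1̂)=1. -/
variable {P : Type*} [PartialOrder P]

/-- The augmented poset `P̂ = P ∪ {0̂, 1̂}`. -/
abbrev Phat (P : Type*) := WithBot (WithTop P)

/-- The embedding of `P` into `P̂`. -/
def toPhat (x : P) : Phat P := ((x : WithTop P) : Phat P)

/-- Extension of `f : P → ℝ` to `P̂` with `f(0̂) = 0` and `f(1̂) = 1`. -/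
def fhat (f : P → ℝ) : Phat P → ℝ :=
  WithBot.recBotCoe 0 (WithTop.recTopCoe 1 f)

/-- `L`: the maximum of `f` over elements of `P̂` covered by `x`. -/
noncomputable def Ltog (f : P → ℝ) (x : P) : ℝ :=
  sSup (fhat f '' {y | y ⋖ toPhat x})

/-- `R`: the minimum of `f` over elements of `P̂` covering `x`. -/
noncomputable def Rtog (f : P → ℝ) (x : P) : ℝ :=
  sInf (fhat f '' {y | toPhat x ⋖ y})

open Classical in
/-- The piecewise-linear toggle at `x`. -/
noncomputable def plToggle (x : P) (f : P → ℝ) : P → ℝ :=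
  Function.update f x (Ltog f x + Rtog f x - f x)

/-- The minimum gap `min {f(y) − f(w) : w ⋖ y in P̂}`. -/
noncomputable def minGap (f : P → ℝ) : ℝ :=
  sInf ((fun p : Phat P × Phat P => fhat f p.2 - fhat f p.1) '' {p | p.1 ⋖ p.2})

/-! The toggle at `x` is an involution, since `L` and `R` do not depend on `f(x)`; so it suffices
to show that it cannot decrease the minimum gap. Only the gaps of the covering relations at `x`
change. If `w ⋖ x ⋖ y`, the new gap below `x` is `L + R - f(x) - f(w) ≥ R - f(x)` and the new
gap above `x` is `f(y) - L - R + f(x) ≥ f(x) - L`; both bounds are old gaps at `x`, attained at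
a cover realizing `R` and at one realizing `L`. -/

omit [PartialOrder P] in
lemma fhat_toPhat (f : P → ℝ) (z : P) : fhat f (toPhat z) = f z := rfl

lemma fhat_plToggle_self (x : P) (f : P → ℝ) :
    fhat (plToggle x f) (toPhat x) = Ltog f x + Rtog f x - f x := by
  simp [fhat_toPhat, plToggle]

lemma fhat_plToggle_of_ne {x : P} (f : P → ℝ) {w : Phat P} (hw : w ≠ toPhat x) :
    fhat (plToggle x f) w = fhat f w := by
  induction w using WithBot.recBotCoe with
  | bot => rfl
  | coe w =>
    induction w using WithTop.recTopCoe with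
    | top => rfl
    | coe z =>
      classical
      exact Function.update_of_ne (fun h : z = x => hw (congrArg toPhat h)) _ _

lemma Ltog_plToggle (x : P) (f : P → ℝ) : Ltog (plToggle x f) x = Ltog f x := by
  unfold Ltog
  congr 1
  exact Set.image_congr fun w hw => fhat_plToggle_of_ne f (CovBy.ne hw)

lemma Rtog_plToggle (x : P) (f : P → ℝ) : Rtog (plToggle x f) x = Rtog f x := by
  unfold Rtog
  congr 1
  exact Set.image_congr fun y hy => fhat_plToggle_of_ne f (CovBy.ne' hy)

lemma plToggle_involutive (x : P) : Function.Involutive (plToggle x) := by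
  classical
  intro f
  rw [plToggle, Ltog_plToggle, Rtog_plToggle, plToggle, Function.update_self,
    Function.update_idem, sub_sub_cancel, Function.update_eq_self]

section Finite

variable [Finite P]

lemma exists_covBy_toPhat_fhat_eq_Ltog (f : P → ℝ) (x : P) :
    ∃ w, w ⋖ toPhat x ∧ fhat f w = Ltog f x := by
  obtain ⟨w, -, hw⟩ := exists_le_covBy_of_lt (WithBot.bot_lt_coe (x : WithTop P))
  have hne : (fhat f '' {w | w ⋖ toPhat x}).Nonempty := ⟨_, w, hw, rfl⟩
  exact hne.csSup_mem (Set.toFinite _)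

lemma exists_toPhat_covBy_fhat_eq_Rtog (f : P → ℝ) (x : P) :
    ∃ y, toPhat x ⋖ y ∧ fhat f y = Rtog f x := by
  obtain ⟨y, hy, -⟩ := exists_covBy_le_of_lt (WithBot.coe_lt_coe.2 (WithTop.coe_lt_top x))
  have hne : (fhat f '' {y | toPhat x ⋖ y}).Nonempty := ⟨_, y, hy, rfl⟩
  exact hne.csInf_mem (Set.toFinite _)

lemma fhat_le_Ltog (f : P → ℝ) {x : P} {w : Phat P} (hw : w ⋖ toPhat x) :
    fhat f w ≤ Ltog f x :=
  le_csSup (Set.toFinite _).bddAbove ⟨w, hw, rfl⟩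

lemma Rtog_le_fhat (f : P → ℝ) {x : P} {y : Phat P} (hy : toPhat x ⋖ y) :
    Rtog f x ≤ fhat f y :=
  csInf_le (Set.toFinite _).bddBelow ⟨y, hy, rfl⟩

lemma minGap_le (f : P → ℝ) {a b : Phat P} (hab : a ⋖ b) : minGap f ≤ fhat f b - fhat f a :=
  csInf_le (Set.toFinite _).bddBelow ⟨(a, b), hab, rfl⟩

lemma le_minGap (f : P → ℝ) {c : ℝ} (h : ∀ a b : Phat P, a ⋖ b → c ≤ fhat f b - fhat f a) :
    c ≤ minGap f := by
  obtain ⟨a, -, hab⟩ := exists_le_covBy_of_lt (bot_lt_top : (⊥ : Phat P) < ⊤)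
  refine le_csInf ⟨_, (a, ⊤), hab, rfl⟩ ?_
  rintro _ ⟨⟨a, b⟩, hab, rfl⟩
  exact h a b hab

lemma minGap_le_minGap_plToggle (x : P) (f : P → ℝ) : minGap f ≤ minGap (plToggle x f) := by
  obtain ⟨wL, hwL, hL⟩ := exists_covBy_toPhat_fhat_eq_Ltog f x
  obtain ⟨yR, hyR, hR⟩ := exists_toPhat_covBy_fhat_eq_Rtog f x
  refine le_minGap _ fun a b hab => ?_
  by_cases hb : b = toPhat x
  · subst hb
    calc minGap f ≤ fhat f yR - fhat f (toPhat x) := minGap_le f hyR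
      _ = Rtog f x - f x := by rw [hR, fhat_toPhat]
      _ ≤ (Ltog f x + Rtog f x - f x) - fhat f a := by linarith [fhat_le_Ltog f hab]
      _ = _ := by rw [fhat_plToggle_self, fhat_plToggle_of_ne f hab.ne]
  by_cases ha : a = toPhat x
  · subst ha
    calc minGap f ≤ fhat f (toPhat x) - fhat f wL := minGap_le f hwL
      _ = f x - Ltog f x := by rw [hL, fhat_toPhat]
      _ ≤ fhat f b - (Ltog f x + Rtog f x - f x) := by linarith [Rtog_le_fhat f hab]
      _ = _ := by rw [fhat_plToggle_self, fhat_plToggle_of_ne f hab.ne']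
  rw [fhat_plToggle_of_ne f ha, fhat_plToggle_of_ne f hb]
  exact minGap_le f hab

end Finite

theorem plToggle_preserves_minGap [Fintype P] (x : P) (f : P → ℝ) :
    minGap (plToggle x f) = minGap f := by
  refine le_antisymm ?_ (minGap_le_minGap_plToggle x f)
  simpa only [plToggle_involutive x f] using minGap_le_minGap_plToggle x (plToggle x f)
end

section
/- For a finite poset P and x ∈ P, the piecewise-linear toggle φ_x maps the order polytope O(P) into itself. -/
variable {P : Type*} [PartialOrder P]

/-- The order polytope: order-preserving maps `P → [0,1]`. -/
def orderPolytope (P : Type*) [PartialOrder P] : Set (P → ℝ) :=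
  {f | (∀ z, f z ∈ Set.Icc (0:ℝ) 1) ∧ Monotone f}

/-!
The extension `f̂` of `f ∈ O(P)` is monotone on the finite poset `P̂`. Every element strictly
below `x` in `P̂` lies below some element covered by `x`, so `f̂ y ≤ L ≤ f x` for all `y < x`,
and dually `f x ≤ R ≤ f̂ y` for all `y > x`; taking `y = 0̂, 1̂` gives `0 ≤ L` and `R ≤ 1`.
The toggled value `L + R - f x` lies in `[L, R]`, hence in `[0, 1]` and between the values
of `f` below and above `x`.
-/

section CovBy

variable {α β : Type*} [PartialOrder α] [ConditionallyCompleteLattice β] {g : α → β} {x y : α}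

theorem Monotone.le_csSup_image_covBy [IsStronglyCoatomic α] (hg : Monotone g) (h : y < x) :
    g y ≤ sSup (g '' {c | c ⋖ x}) := by
  obtain ⟨c, hyc, hcx⟩ := exists_le_covBy_of_lt h
  have hbdd : BddAbove (g '' {c | c ⋖ x}) := ⟨g x, by rintro _ ⟨d, hd, rfl⟩; exact hg hd.le⟩
  exact (hg hyc).trans (le_csSup hbdd ⟨c, hcx, rfl⟩)

theorem Monotone.csSup_image_covBy_le [IsStronglyCoatomic α] (hg : Monotone g) (h : y < x) :
    sSup (g '' {c | c ⋖ x}) ≤ g x := by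
  obtain ⟨c, -, hcx⟩ := exists_le_covBy_of_lt h
  exact csSup_le ⟨g c, c, hcx, rfl⟩ (by rintro _ ⟨d, hd, rfl⟩; exact hg hd.le)

theorem Monotone.csInf_image_covBy_le [IsStronglyAtomic α] (hg : Monotone g) (h : x < y) :
    sInf (g '' {c | x ⋖ c}) ≤ g y := by
  obtain ⟨c, hxc, hcy⟩ := exists_covBy_le_of_lt h
  have hbdd : BddBelow (g '' {c | x ⋖ c}) := ⟨g x, by rintro _ ⟨d, hd, rfl⟩; exact hg hd.le⟩
  exact (csInf_le hbdd ⟨c, hxc, rfl⟩).trans (hg hcy)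

theorem Monotone.le_csInf_image_covBy [IsStronglyAtomic α] (hg : Monotone g) (h : x < y) :
    g x ≤ sInf (g '' {c | x ⋖ c}) := by
  obtain ⟨c, hxc, -⟩ := exists_covBy_le_of_lt h
  exact le_csInf ⟨g c, c, hxc, rfl⟩ (by rintro _ ⟨d, hd, rfl⟩; exact hg hd.le)

end CovBy

section OrderPolytope

variable {f : P → ℝ}

theorem fhat_mem_Icc (hf : f ∈ orderPolytope P) (y : Phat P) : fhat f y ∈ Set.Icc (0:ℝ) 1 := by
  induction y using WithBot.recBotCoe with
  | bot => exact ⟨le_rfl, zero_le_one⟩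
  | coe a =>
    induction a using WithTop.recTopCoe with
    | top => exact ⟨zero_le_one, le_rfl⟩
    | coe w => exact hf.1 w

theorem monotone_fhat (hf : f ∈ orderPolytope P) : Monotone (fhat f) := by
  intro u v huv
  induction u using WithBot.recBotCoe with
  | bot => exact (fhat_mem_Icc hf v).1
  | coe a =>
    induction v using WithBot.recBotCoe with
    | bot => exact absurd huv (by simp)
    | coe b =>
      induction b using WithTop.recTopCoe with
      | top => exact (fhat_mem_Icc hf _).2
      | coe w =>
        induction a using WithTop.recTopCoe with
        | top => exact absurd (WithBot.coe_le_coe.mp huv) (by simp)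
        | coe u => exact hf.2 (WithTop.coe_le_coe.mp (WithBot.coe_le_coe.mp huv))

theorem toPhat_lt_toPhat {a b : P} : toPhat a < toPhat b ↔ a < b := by
  simp [toPhat]

theorem update_mem_orderPolytope [DecidableEq P] (hf : f ∈ orderPolytope P) {x : P} {v : ℝ}
    (hv : v ∈ Set.Icc (0:ℝ) 1) (hlo : ∀ a < x, f a ≤ v) (hhi : ∀ b, x < b → v ≤ f b) :
    Function.update f x v ∈ orderPolytope P := by
  refine ⟨(Function.forall_update_iff f fun _ r ↦ r ∈ Set.Icc (0:ℝ) 1).mpr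
    ⟨hv, fun z _ ↦ hf.1 z⟩, fun a b hab ↦ ?_⟩
  by_cases ha : a = x <;> by_cases hb : b = x
  · simp [ha, hb]
  · subst ha; simpa [hb] using hhi b (lt_of_le_of_ne hab (Ne.symm hb))
  · subst hb; simpa [ha] using hlo a (lt_of_le_of_ne hab ha)
  · simpa [ha, hb] using hf.2 hab

end OrderPolytope

theorem plToggle_mem_orderPolytope [Fintype P] (x : P) (f : P → ℝ)
    (hf : f ∈ orderPolytope P) :
    plToggle x f ∈ orderPolytope P := by
  classical
  have hg := monotone_fhat hf
  have hbot : (⊥ : Phat P) < toPhat x := WithBot.bot_lt_coe _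
  have htop : toPhat x < ⊤ := WithBot.coe_lt_coe.mpr (WithTop.coe_lt_top x)
  have hL0 : 0 ≤ Ltog f x := hg.le_csSup_image_covBy hbot
  have hLx : Ltog f x ≤ f x := hg.csSup_image_covBy_le hbot
  have hxR : f x ≤ Rtog f x := hg.le_csInf_image_covBy htop
  have hR1 : Rtog f x ≤ 1 := hg.csInf_image_covBy_le htop
  refine update_mem_orderPolytope hf ⟨by linarith, by linarith⟩ (fun a ha ↦ ?_) (fun b hb ↦ ?_)
  · have : f a ≤ Ltog f x := hg.le_csSup_image_covBy (toPhat_lt_toPhat.mpr ha)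
    linarith
  · have : Rtog f x ≤ f b := hg.csInf_image_covBy_le (toPhat_lt_toPhat.mpr hb)
    linarith
end

section
/- On the vertices of the order polytope O(P), identified with filters of P (equivalently with order ideals via complementation), the piecewise-linear toggle φ_x acts as the combinatorial toggle τ_x on the complementary order ideal: if f is the indicator function of the filter P \ I, then φ_x f is the indicator function of P \ τ_x(I). -/
variable {P : Type*} [PartialOrder P]

open scoped symmDiff
open Classical in
/-- The combinatorial toggle at `x` on subsets of a poset. -/
noncomputable def ctoggle (x : P) (I : Set P) : Set P :=
  if IsLowerSet (I ∆ {x}) then I ∆ {x} else I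

/-!
On a vertex, i.e. the indicator function of the filter `P \ I` for a lower set `I`, all values
of `fhat` lie in `{0, 1}`, so `Ltog` and `Rtog` become Boolean tests: `Ltog` is `1` exactly when
some lower cover of `x` lies outside `I`, and `Rtog` is `0` exactly when some upper cover of `x`
lies in `I`. When `x ∈ I` the other two terms of the toggle vanish and the new value is `Rtog`,
which is `1` exactly when `x` is maximal in `I`, i.e. when `I \ {x}` is again a lower set; dually
when `x ∉ I`, the new value is `Ltog`, which is `0` exactly when `insert x I` is a lower set.
-/

open scoped symmDiff

section Combinatorial

variable {I : Set P} {x y : P}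

theorem IsLowerSet.isLowerSet_diff_singleton_iff [IsStronglyAtomic P] (hI : IsLowerSet I) :
    IsLowerSet (I \ {x}) ↔ ∀ z, x ⋖ z → z ∉ I := by
  constructor
  · intro h z hxz hz
    exact (h hxz.le ⟨hz, hxz.ne'⟩).2 rfl
  · intro h
    refine hI.erase fun b hb hxb => ?_
    by_contra hbx
    obtain ⟨z, hxz, hzb⟩ := (lt_of_le_of_ne hxb (Ne.symm hbx)).exists_covby_le
    exact h z hxz (hI hzb hb)

theorem IsLowerSet.isLowerSet_insert_iff [IsStronglyCoatomic P] (hI : IsLowerSet I) :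
    IsLowerSet (insert x I) ↔ ∀ z, z ⋖ x → z ∈ I := by
  constructor
  · intro h z hzx
    exact (h hzx.le (Set.mem_insert x I)).resolve_left hzx.ne
  · rintro h b a hab (rfl | ha)
    · rcases eq_or_lt_of_le hab with rfl | hlt
      · exact Set.mem_insert _ _
      · obtain ⟨z, haz, hzb⟩ := hlt.exists_le_covby
        exact Or.inr (hI haz (h z hzb))
    · exact Or.inr (hI hab ha)

theorem mem_ctoggle_of_ne (h : y ≠ x) : y ∈ ctoggle x I ↔ y ∈ I := by
  unfold ctoggle
  split_ifs <;> simp [Set.mem_symmDiff, h]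

theorem IsLowerSet.mem_ctoggle_self_iff_of_mem [IsStronglyAtomic P] (hI : IsLowerSet I)
    (hx : x ∈ I) : x ∈ ctoggle x I ↔ ∃ z, x ⋖ z ∧ z ∈ I := by
  rw [ctoggle, symmDiff_of_ge (Set.singleton_subset_iff.2 hx), hI.isLowerSet_diff_singleton_iff]
  split_ifs with h
  · simpa using h
  · push Not at h
    simpa [hx] using h

theorem IsLowerSet.mem_ctoggle_self_iff_of_notMem [IsStronglyCoatomic P] (hI : IsLowerSet I)
    (hx : x ∉ I) : x ∈ ctoggle x I ↔ ∀ z, z ⋖ x → z ∈ I := by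
  have hinsert : I ∆ {x} = insert x I :=
    (Set.disjoint_singleton_right.2 hx).symmDiff_eq_sup.trans Set.union_singleton
  rw [ctoggle, hinsert, hI.isLowerSet_insert_iff]
  split_ifs with h
  · simpa using h
  · simpa [hx] using h

end Combinatorial

section Piecewise

open Classical

variable {I : Set P} {x : P} {y : Phat P}

@[simp]
theorem fhat_bot {α : Type*} (f : α → ℝ) : fhat f ⊥ = 0 := rfl

@[simp]
theorem fhat_top {α : Type*} (f : α → ℝ) : fhat f ⊤ = 1 := rfl

@[simp]
theorem fhat_coe_coe {α : Type*} (f : α → ℝ) (a : α) :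
    fhat f ((a : WithTop α) : Phat α) = f a :=
  rfl

@[simp]
theorem fhat_toPhat_s14 {α : Type*} (f : α → ℝ) (a : α) : fhat f (toPhat a) = f a := rfl

@[simp]
theorem toPhat_covBy_toPhat {a b : P} : toPhat a ⋖ toPhat b ↔ a ⋖ b :=
  WithBot.coe_covBy_coe.trans WithTop.coe_covBy_coe

theorem eq_bot_or_exists_of_covBy_toPhat (h : y ⋖ toPhat x) :
    y = ⊥ ∨ ∃ z, z ⋖ x ∧ y = toPhat z := by
  induction y using WithBot.recBotCoe with
  | bot => exact Or.inl rfl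
  | coe w =>
    induction w using WithTop.recTopCoe with
    | top => exact absurd (WithBot.coe_lt_coe.mp h.lt) not_top_lt
    | coe z => exact Or.inr ⟨z, toPhat_covBy_toPhat.1 h, rfl⟩

theorem eq_top_or_exists_of_toPhat_covBy (h : toPhat x ⋖ y) :
    y = (⊤ : WithTop P) ∨ ∃ z, x ⋖ z ∧ y = toPhat z := by
  induction y using WithBot.recBotCoe with
  | bot => exact absurd h.lt not_lt_bot
  | coe w =>
    induction w using WithTop.recTopCoe with
    | top => exact Or.inl rfl
    | coe z => exact Or.inr ⟨z, toPhat_covBy_toPhat.1 h, rfl⟩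

theorem exists_toPhat_covBy [IsStronglyAtomic P] (x : P) : ∃ y : Phat P, toPhat x ⋖ y := by
  by_cases hx : IsMax x
  · exact ⟨(⊤ : WithTop P), WithBot.coe_covBy_coe.2 (WithTop.coe_covBy_top.2 hx)⟩
  · obtain ⟨z, hxz⟩ := not_isMax_iff.1 hx
    obtain ⟨y, hxy, -⟩ := hxz.exists_covby_le
    exact ⟨toPhat y, toPhat_covBy_toPhat.2 hxy⟩

theorem image_fhat_indicator_compl_subset {α : Type*} (I : Set α) (s : Set (Phat α)) :
    fhat (Iᶜ.indicator 1) '' s ⊆ {0, 1} := by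
  rintro _ ⟨y, -, rfl⟩
  induction y using WithBot.recBotCoe with
  | bot => simp
  | coe w =>
    induction w using WithTop.recTopCoe with
    | top => simp
    | coe z => by_cases hz : z ∈ I <;> simp [hz]

theorem Real.sSup_of_subset_zero_one {S : Set ℝ} (hS : S ⊆ {0, 1}) :
    sSup S = if (1 : ℝ) ∈ S then 1 else 0 := by
  have hle : ∀ a ∈ S, a ≤ 1 := fun a ha => by rcases hS ha with rfl | rfl <;> norm_num
  split_ifs with h1
  · exact le_antisymm (csSup_le ⟨1, h1⟩ hle) (le_csSup ⟨1, hle⟩ h1)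
  · have hS0 : S ⊆ {0} := fun a ha => (hS ha).resolve_right (by rintro rfl; exact h1 ha)
    rcases Set.subset_singleton_iff_eq.1 hS0 with rfl | rfl
    · exact Real.sSup_empty
    · exact csSup_singleton 0

theorem Real.sInf_of_subset_zero_one {S : Set ℝ} (hne : S.Nonempty) (hS : S ⊆ {0, 1}) :
    sInf S = if (0 : ℝ) ∈ S then 0 else 1 := by
  have hge : ∀ a ∈ S, 0 ≤ a := fun a ha => by rcases hS ha with rfl | rfl <;> norm_num
  split_ifs with h0
  · exact le_antisymm (csInf_le ⟨0, hge⟩ h0) (le_csInf ⟨0, h0⟩ hge)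
  · have hS1 : S = {1} := Set.eq_singleton_iff_nonempty_unique_mem.2
      ⟨hne, fun a ha => (hS ha).resolve_left (by rintro rfl; exact h0 ha)⟩
    rw [hS1, csInf_singleton]

theorem Ltog_indicator_compl (I : Set P) (x : P) :
    Ltog (Iᶜ.indicator 1) x = if ∃ z, z ⋖ x ∧ z ∉ I then 1 else 0 := by
  rw [Ltog, Real.sSup_of_subset_zero_one (image_fhat_indicator_compl_subset I _)]
  congr 1
  refine propext ⟨?_, fun ⟨z, hzx, hz⟩ =>
    ⟨toPhat z, toPhat_covBy_toPhat.2 hzx, by simp [hz]⟩⟩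
  rintro ⟨y, hy, hy1⟩
  rcases eq_bot_or_exists_of_covBy_toPhat hy with rfl | ⟨z, hzx, rfl⟩
  · simp at hy1
  · exact ⟨z, hzx, by simpa [Set.indicator_apply] using hy1⟩

theorem Rtog_indicator_compl [IsStronglyAtomic P] (I : Set P) (x : P) :
    Rtog (Iᶜ.indicator 1) x = if ∃ z, x ⋖ z ∧ z ∈ I then 0 else 1 := by
  rw [Rtog, Real.sInf_of_subset_zero_one
    (Set.Nonempty.image (s := {y | toPhat x ⋖ y}) _ (exists_toPhat_covBy x))
    (image_fhat_indicator_compl_subset I _)]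
  congr 1
  refine propext ⟨?_, fun ⟨z, hxz, hz⟩ =>
    ⟨toPhat z, toPhat_covBy_toPhat.2 hxz, by simp [hz]⟩⟩
  rintro ⟨y, hy, hy0⟩
  rcases eq_top_or_exists_of_toPhat_covBy hy with rfl | ⟨z, hxz, rfl⟩
  · simp at hy0
  · exact ⟨z, hxz, by simpa [Set.indicator_apply] using hy0⟩

theorem plToggle_apply_of_ne (f : P → ℝ) {w : P} (hw : w ≠ x) : plToggle x f w = f w :=
  Function.update_of_ne hw _ _

theorem IsLowerSet.plToggle_indicator_compl_self_of_mem [IsStronglyAtomic P]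
    (hI : IsLowerSet I) (hx : x ∈ I) :
    plToggle x (Iᶜ.indicator 1) x = if ∃ z, x ⋖ z ∧ z ∈ I then 0 else 1 := by
  have hL : Ltog (Iᶜ.indicator 1) x = 0 := by
    rw [Ltog_indicator_compl, if_neg]
    rintro ⟨z, hzx, hz⟩
    exact hz (hI hzx.le hx)
  simp [plToggle, hL, Rtog_indicator_compl, hx]

theorem IsLowerSet.plToggle_indicator_compl_self_of_notMem [IsStronglyAtomic P]
    (hI : IsLowerSet I) (hx : x ∉ I) :
    plToggle x (Iᶜ.indicator 1) x = if ∀ z, z ⋖ x → z ∈ I then 0 else 1 := by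
  have hR : Rtog (Iᶜ.indicator 1) x = 1 := by
    rw [Rtog_indicator_compl, if_neg]
    rintro ⟨z, hxz, hz⟩
    exact hx (hI hxz.le hz)
  by_cases h : ∀ z, z ⋖ x → z ∈ I <;> simp_all [plToggle, Ltog_indicator_compl]

end Piecewise

theorem ite_mem_zero_one_eq_indicator_compl {α : Type*} (S : Set α) [DecidablePred (· ∈ S)] :
    (fun z => if z ∈ S then (0 : ℝ) else 1) = Sᶜ.indicator 1 := by
  ext z
  by_cases hz : z ∈ S <;> simp [hz]

open Classical in
theorem plToggle_on_vertices [Fintype P] (x : P) (I : Set P) (hI : IsLowerSet I) :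
    plToggle x (fun z => if z ∈ I then (0:ℝ) else 1) =
      fun z => if z ∈ ctoggle x I then (0:ℝ) else 1 := by
  rw [ite_mem_zero_one_eq_indicator_compl, ite_mem_zero_one_eq_indicator_compl]
  ext w
  rcases ne_or_eq w x with hw | rfl
  · simp [plToggle_apply_of_ne _ hw, Set.indicator_apply, mem_ctoggle_of_ne hw]
  by_cases hw : w ∈ I
  · rw [hI.plToggle_indicator_compl_self_of_mem hw]
    simp only [Set.indicator_apply, Set.mem_compl_iff, hI.mem_ctoggle_self_iff_of_mem hw, ite_not,
      Pi.one_apply]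
    congr
  · rw [hI.plToggle_indicator_compl_self_of_notMem hw]
    simp only [Set.indicator_apply, Set.mem_compl_iff, hI.mem_ctoggle_self_iff_of_notMem hw,
      ite_not, Pi.one_apply]
    congr
end

section
/- If E₁ and E₂ are subtraction-free rational expressions in variables t₁,…,t_r built from the constant 1 and operations +, ∥ (parallel sum), ×, ÷, and E₁ = E₂ for all positive real inputs, then the tropicalizations e₁ and e₂ — obtained by replacing 1, +, ∥, ×, ÷ by 0, min, max, +, − respectively — satisfy e₁ = e₂ for all real inputs. -/
/-- Subtraction-free rational expressions in `r` variables, built from the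
constant 1 and the operations `+`, `∥` (parallel sum), `×`, `÷`. -/
inductive SFExpr (r : ℕ) : Type
  | var : Fin r → SFExpr r
  | one : SFExpr r
  | add : SFExpr r → SFExpr r → SFExpr r
  | par : SFExpr r → SFExpr r → SFExpr r
  | mul : SFExpr r → SFExpr r → SFExpr r
  | div : SFExpr r → SFExpr r → SFExpr r

/-- Evaluation of a subtraction-free expression at real inputs, with
`a ∥ b = ab/(a+b)`. -/
noncomputable def SFExpr.eval {r : ℕ} (t : Fin r → ℝ) : SFExpr r → ℝ
  | var i => t i
  | one => 1
  | add a b => a.eval t + b.eval t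
  | par a b => a.eval t * b.eval t / (a.eval t + b.eval t)
  | mul a b => a.eval t * b.eval t
  | div a b => a.eval t / b.eval t

/-- Tropicalization: replace `1, +, ∥, ×, ÷` by `0, min, max, +, −`. -/
noncomputable def SFExpr.trop {r : ℕ} (t : Fin r → ℝ) : SFExpr r → ℝ
  | var i => t i
  | one => 0
  | add a b => min (a.trop t) (b.trop t)
  | par a b => max (a.trop t) (b.trop t)
  | mul a b => a.trop t + b.trop t
  | div a b => a.trop t - b.trop t

/-!
Substitute `tᵢ = exp (-sᵢ)`. Since `max x y ≤ log (eˣ + eʸ) ≤ max x y + log 2`, and `∥` is `+` in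
inverted variables, induction on the expression shows `log E(exp (-s)) = -e(s) + O(1)` uniformly
in `s`. As `e` is positively homogeneous, taking `s = N • t` turns an identity `E₁ = E₂` into
`N (e₁(t) - e₂(t)) = O(1)` for all `N ≥ 0`, which forces `e₁(t) = e₂(t)`.
-/

open Real

lemma abs_log_add_sub_max_log_le {A B : ℝ} (hA : 0 < A) (hB : 0 < B) :
    |log (A + B) - max (log A) (log B)| ≤ log 2 := by
  wlog hBA : B ≤ A generalizing A B
  · simpa only [add_comm, max_comm] using this hB hA (le_of_not_ge hBA)
  rw [max_eq_left (log_le_log hB hBA), ← log_div (by positivity) hA.ne',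
    abs_of_nonneg (log_nonneg ((le_div_iff₀ hA).2 (by linarith)))]
  exact log_le_log (by positivity) ((div_le_iff₀ hA).2 (by linarith))

lemma abs_log_par_sub_min_log_le {A B : ℝ} (hA : 0 < A) (hB : 0 < B) :
    |log (A * B / (A + B)) - min (log A) (log B)| ≤ log 2 := by
  have hpar : A * B / (A + B) = (A⁻¹ + B⁻¹)⁻¹ := by field_simp; ring
  have h := abs_log_add_sub_max_log_le (inv_pos.2 hA) (inv_pos.2 hB)
  rw [log_inv, log_inv, max_neg_neg, ← abs_neg] at h
  rw [hpar, log_inv]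
  convert h using 2
  ring

lemma abs_log_add_add_min_le {A B α β Ca Cb : ℝ} (hA : 0 < A) (hB : 0 < B)
    (ha : |log A + α| ≤ Ca) (hb : |log B + β| ≤ Cb) :
    |log (A + B) + min α β| ≤ log 2 + max Ca Cb := by
  have hmax := abs_max_sub_max_le_max (log A) (log B) (-α) (-β)
  rw [max_neg_neg, sub_neg_eq_add, sub_neg_eq_add, sub_neg_eq_add] at hmax
  calc _ = |(log (A + B) - max (log A) (log B)) + (max (log A) (log B) + min α β)| := by ring_nf
    _ ≤ log 2 + max Ca Cb := (abs_add_le _ _).trans <|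
        add_le_add (abs_log_add_sub_max_log_le hA hB) (hmax.trans (max_le_max ha hb))

lemma abs_log_par_add_max_le {A B α β Ca Cb : ℝ} (hA : 0 < A) (hB : 0 < B)
    (ha : |log A + α| ≤ Ca) (hb : |log B + β| ≤ Cb) :
    |log (A * B / (A + B)) + max α β| ≤ log 2 + max Ca Cb := by
  have hmin := abs_min_sub_min_le_max (log A) (log B) (-α) (-β)
  rw [min_neg_neg, sub_neg_eq_add, sub_neg_eq_add, sub_neg_eq_add] at hmin
  calc _ = |(log (A * B / (A + B)) - min (log A) (log B)) + (min (log A) (log B) + max α β)| := by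
        ring_nf
    _ ≤ log 2 + max Ca Cb := (abs_add_le _ _).trans <|
        add_le_add (abs_log_par_sub_min_log_le hA hB) (hmin.trans (max_le_max ha hb))

lemma eq_zero_of_forall_abs_mul_le {d C : ℝ} (h : ∀ N : ℝ, 0 ≤ N → |N * d| ≤ C) : d = 0 := by
  by_contra hd
  have hC : 0 ≤ C := by simpa using h 0 le_rfl
  have := h ((C + 1) / |d|) (by positivity)
  rw [abs_mul, abs_of_nonneg (by positivity), div_mul_cancel₀ _ (abs_ne_zero.2 hd)] at this
  linarith

namespace SFExpr

variable {r : ℕ}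

lemma eval_pos (E : SFExpr r) {t : Fin r → ℝ} (ht : ∀ i, 0 < t i) : 0 < E.eval t := by
  induction E with
  | var i => exact ht i
  | one => exact one_pos
  | add a b ha hb => exact add_pos ha hb
  | par a b ha hb => exact div_pos (mul_pos ha hb) (add_pos ha hb)
  | mul a b ha hb => exact mul_pos ha hb
  | div a b ha hb => exact div_pos ha hb

lemma trop_smul (E : SFExpr r) (t : Fin r → ℝ) {c : ℝ} (hc : 0 ≤ c) :
    E.trop (c • t) = c * E.trop t := by
  induction E with
  | var i => rfl
  | one => simp [trop]
  | add a b ha hb => simp only [trop, ha, hb, mul_min_of_nonneg _ _ hc]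
  | par a b ha hb => simp only [trop, ha, hb, mul_max_of_nonneg _ _ hc]
  | mul a b ha hb => simp only [trop, ha, hb, mul_add]
  | div a b ha hb => simp only [trop, ha, hb, mul_sub]

lemma exists_abs_log_eval_exp_add_trop_le (E : SFExpr r) :
    ∃ C, ∀ s : Fin r → ℝ, |log (E.eval fun i => exp (-s i)) + E.trop s| ≤ C := by
  have hu : ∀ (s : Fin r → ℝ) i, 0 < exp (-s i) := fun s i => exp_pos (-s i)
  induction E with
  | var i => exact ⟨0, fun s => by simp [eval, trop]⟩
  | one => exact ⟨0, fun s => by simp [eval, trop]⟩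
  | add a b ha hb =>
    obtain ⟨Ca, ha⟩ := ha
    obtain ⟨Cb, hb⟩ := hb
    exact ⟨log 2 + max Ca Cb, fun s =>
      abs_log_add_add_min_le (a.eval_pos (hu s)) (b.eval_pos (hu s)) (ha s) (hb s)⟩
  | par a b ha hb =>
    obtain ⟨Ca, ha⟩ := ha
    obtain ⟨Cb, hb⟩ := hb
    exact ⟨log 2 + max Ca Cb, fun s =>
      abs_log_par_add_max_le (a.eval_pos (hu s)) (b.eval_pos (hu s)) (ha s) (hb s)⟩
  | mul a b ha hb =>
    obtain ⟨Ca, ha⟩ := ha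
    obtain ⟨Cb, hb⟩ := hb
    refine ⟨Ca + Cb, fun s => ?_⟩
    set u : Fin r → ℝ := fun i => exp (-s i)
    calc _ = |(log (a.eval u) + a.trop s) + (log (b.eval u) + b.trop s)| := by
          rw [eval, trop, log_mul (a.eval_pos (hu s)).ne' (b.eval_pos (hu s)).ne']; congr 1; ring
      _ ≤ Ca + Cb := (abs_add_le _ _).trans (add_le_add (ha s) (hb s))
  | div a b ha hb =>
    obtain ⟨Ca, ha⟩ := ha
    obtain ⟨Cb, hb⟩ := hb
    refine ⟨Ca + Cb, fun s => ?_⟩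
    set u : Fin r → ℝ := fun i => exp (-s i)
    calc _ = |(log (a.eval u) + a.trop s) - (log (b.eval u) + b.trop s)| := by
          rw [eval, trop, log_div (a.eval_pos (hu s)).ne' (b.eval_pos (hu s)).ne']; congr 1; ring
      _ ≤ Ca + Cb := (abs_sub _ _).trans (add_le_add (ha s) (hb s))

end SFExpr

theorem tropicalization_of_identity {r : ℕ} (E₁ E₂ : SFExpr r)
    (h : ∀ t : Fin r → ℝ, (∀ i, 0 < t i) → E₁.eval t = E₂.eval t) :
    ∀ t : Fin r → ℝ, E₁.trop t = E₂.trop t := by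
  intro t
  obtain ⟨C₁, hC₁⟩ := E₁.exists_abs_log_eval_exp_add_trop_le
  obtain ⟨C₂, hC₂⟩ := E₂.exists_abs_log_eval_exp_add_trop_le
  suffices ∀ N : ℝ, 0 ≤ N → |N * (E₁.trop t - E₂.trop t)| ≤ C₁ + C₂ from
    sub_eq_zero.1 (eq_zero_of_forall_abs_mul_le this)
  intro N hN
  have heval := h (fun i => exp (-(N • t) i)) fun i => exp_pos _
  calc |N * (E₁.trop t - E₂.trop t)|
      = |(log (E₁.eval fun i => exp (-(N • t) i)) + E₁.trop (N • t)) -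
          (log (E₂.eval fun i => exp (-(N • t) i)) + E₂.trop (N • t))| := by
        rw [heval, E₁.trop_smul t hN, E₂.trop_smul t hN]; congr 1; ring
    _ ≤ C₁ + C₂ := (abs_sub _ _).trans (add_le_add (hC₁ _) (hC₂ _))
end
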